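/- For every integer p ≥ 3 and every β > β_0 > β*(p), the equality sup_{x ∈ η_p^{−1}((β,∞))} H_{β_0,p}(x) = sup_{x ∈ (m_*(β,p), 1]} H_{β_0,p}(x) holds if and only if H_{β_0,p}(m_*(β,p)) ≥ 0, where η_p^{−1}((β,∞)) = {t ∈ [−1,1] : η_p(t) > β}. -/

import Mathlib

open Real Set Filter

/-- `I(x) = ½[(1+x)log(1+x) + (1−x)log(1−x)]` (with `Real.log 0 = 0`). -/
noncomputable def bahI (x : ℝ) : ℝ :=
  ((1 + x) * Real.log (1 + x) + (1 - x) * Real.log (1 - x)) / 2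

/-- `H_{β,p}(x) = β xᵖ − I(x)`. -/
noncomputable def bahH (β : ℝ) (p : ℕ) (x : ℝ) : ℝ := β * x ^ p - bahI x

/-- `β*(p) = sup {β ≥ 0 : sup_{x∈[−1,1]} H_{β,p}(x) = 0}`. -/
noncomputable def betaStar (p : ℕ) : ℝ :=
  sSup {β : ℝ | 0 ≤ β ∧ sSup (bahH β p '' Set.Icc (-1 : ℝ) 1) = 0}

/-- inverse hyperbolic tangent. -/
noncomputable def arctanh (x : ℝ) : ℝ := Real.log ((1 + x) / (1 - x)) / 2

/-- `η_p(t) = p⁻¹ t^{1−p} arctanh t` for `t ≠ 0`, and `η_p(0) = 0`. -/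
noncomputable def etaFn (p : ℕ) (t : ℝ) : ℝ :=
  if t = 0 then 0 else (p : ℝ)⁻¹ * t ^ (1 - (p : ℤ)) * arctanh t

/-! On `(0,1)` the derivative of `H_β` is `p t^{p-1} (β - η_p t)`, so the maximizer `m` satisfies
`η_p m = β`. The sign of `η_p'` is that of `t/(1-t²) - (p-1) artanh t`, which vanishes at `0` and
changes sign at most once; hence `η_p` first decreases and then increases, and it must be
increasing at `m` (otherwise `H_β` would increase just after `m`). Consequently `{η_p > β}`
contains `(m,1)` and arbitrarily small `t > 0` (as `η_p → ∞` at `0⁺` when `p ≥ 3`), while any of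
its points in `(0,m)` lies on the decreasing branch, where `H_β` decreases from `H_β 0 = 0`;
negative points reduce to positive ones by parity. Since `H_{β₀} = H_β - (β - β₀) xᵖ`, on the
superlevel set `H_{β₀}` stays below `max 0 (H_{β₀} m)` and approaches both values, while on
`(m,1]` it stays below `H_{β₀} m` and approaches it. -/

open Topology

lemma arctanh_eq_log_sub {x : ℝ} (h1 : -1 < x) (h2 : x < 1) :
    arctanh x = (Real.log (1 + x) - Real.log (1 - x)) / 2 := by
  rw [arctanh, Real.log_div (by linarith) (by linarith)]

lemma arctanh_eq_artanh {x : ℝ} (hx : x ∈ Icc (-1) 1) : arctanh x = Real.artanh x := by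
  rw [Real.artanh_eq_half_log hx, arctanh]
  ring

lemma arctanh_neg (x : ℝ) : arctanh (-x) = -arctanh x := by
  rw [arctanh, arctanh, sub_neg_eq_add, ← sub_eq_add_neg, ← inv_div (1 + x), Real.log_inv, neg_div]

lemma hasDerivAt_arctanh {x : ℝ} (h1 : -1 < x) (h2 : x < 1) :
    HasDerivAt arctanh (1 - x ^ 2)⁻¹ x := by
  have h := ((((hasDerivAt_id' x).const_add 1).log (by simp; linarith)).sub
    (((hasDerivAt_id' x).const_sub 1).log (by simp; linarith))).div_const 2
  refine (h.congr_of_eventuallyEq ?_).congr_deriv ?_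
  · filter_upwards [Ioo_mem_nhds h1 h2] with y hy using arctanh_eq_log_sub hy.1 hy.2
  · have h1' : 1 + x ≠ 0 := by linarith
    have h2' : 1 - x ≠ 0 := by linarith
    have h3' : 1 - x ^ 2 ≠ 0 := by nlinarith
    field_simp
    ring

lemma hasDerivAt_bahI {x : ℝ} (h1 : -1 < x) (h2 : x < 1) :
    HasDerivAt bahI (arctanh x) x := by
  have hplus := (hasDerivAt_id' x).const_add 1
  have hminus := (hasDerivAt_id' x).const_sub 1
  have h := ((hplus.mul (hplus.log (by simp; linarith))).add
    (hminus.mul (hminus.log (by simp; linarith)))).div_const 2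
  refine h.congr_deriv ?_
  have h1' : 1 + x ≠ 0 := by linarith
  have h2' : 1 - x ≠ 0 := by linarith
  rw [arctanh_eq_log_sub h1 h2]
  field_simp
  ring

lemma continuous_bahI : Continuous bahI :=
  ((Real.continuous_mul_log.comp (continuous_const.add continuous_id)).add
    (Real.continuous_mul_log.comp (continuous_const.sub continuous_id))).div_const 2

lemma continuous_bahH (β : ℝ) (p : ℕ) : Continuous (bahH β p) :=
  (continuous_const.mul (continuous_pow p)).sub continuous_bahI

lemma bahH_zero (β : ℝ) {p : ℕ} (hp : p ≠ 0) : bahH β p 0 = 0 := by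
  simp [bahH, bahI, zero_pow hp]

lemma bahH_neg_of_even (β : ℝ) {p : ℕ} (hp : Even p) (x : ℝ) : bahH β p (-x) = bahH β p x := by
  rw [bahH, bahH, hp.neg_pow, bahI, bahI, sub_neg_eq_add, ← sub_eq_add_neg]
  ring

lemma bahH_lt_bahH_of_lt (p : ℕ) {β₀ β x : ℝ} (hβ : β₀ < β) (hx : 0 < x) :
    bahH β₀ p x < bahH β p x := by
  have := mul_lt_mul_of_pos_right hβ (pow_pos hx p)
  simp only [bahH]
  linarith

lemma etaFn_zero (p : ℕ) : etaFn p 0 = 0 := if_pos rfl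

lemma etaFn_of_ne_zero {p : ℕ} (hp : p ≠ 0) {t : ℝ} (ht : t ≠ 0) :
    etaFn p t = arctanh t / (p * t ^ (p - 1)) := by
  have : (1 - (p : ℤ)) = -((p - 1 : ℕ) : ℤ) := by omega
  rw [etaFn, if_neg ht, this, zpow_neg, zpow_natCast]
  field_simp

lemma etaFn_pos {p : ℕ} (hp : p ≠ 0) {t : ℝ} (ht : t ∈ Ioo 0 1) : 0 < etaFn p t := by
  rw [etaFn_of_ne_zero hp ht.1.ne', arctanh_eq_artanh ⟨by linarith [ht.1], ht.2.le⟩]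
  exact div_pos (Real.artanh_pos ht) (by have := ht.1; positivity)

lemma etaFn_nonneg {p : ℕ} (hp : p ≠ 0) {t : ℝ} (ht : t ∈ Icc 0 1) : 0 ≤ etaFn p t := by
  rcases ht.1.eq_or_lt with rfl | ht0
  · rw [etaFn_zero]
  rw [etaFn_of_ne_zero hp ht0.ne', arctanh_eq_artanh ⟨by linarith [ht.1], ht.2⟩]
  exact div_nonneg (Real.artanh_nonneg ht.1) (by positivity)

lemma etaFn_neg_of_even {p : ℕ} (hp : Even p) (t : ℝ) : etaFn p (-t) = etaFn p t := by
  rcases eq_or_ne t 0 with rfl | ht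
  · rw [neg_zero]
  have hodd : Odd (1 - (p : ℤ)) := odd_one.sub_even (by exact_mod_cast hp)
  rw [etaFn, etaFn, if_neg (neg_ne_zero.2 ht), if_neg ht, hodd.neg_zpow, arctanh_neg]
  ring

lemma etaFn_neg_of_odd {p : ℕ} (hp : Odd p) (t : ℝ) : etaFn p (-t) = -etaFn p t := by
  rcases eq_or_ne t 0 with rfl | ht
  · simp [etaFn_zero]
  have heven : Even (1 - (p : ℤ)) := odd_one.sub_odd (by exact_mod_cast hp)
  rw [etaFn, etaFn, if_neg (neg_ne_zero.2 ht), if_neg ht, heven.neg_zpow, arctanh_neg]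
  ring

lemma hasDerivAt_bahH {p : ℕ} (hp : p ≠ 0) (β : ℝ) {t : ℝ} (ht0 : 0 < t) (ht1 : t < 1) :
    HasDerivAt (bahH β p) (p * t ^ (p - 1) * (β - etaFn p t)) t := by
  refine (((hasDerivAt_pow p t).const_mul β).sub
    (hasDerivAt_bahI (by linarith) ht1)).congr_deriv ?_
  rw [etaFn_of_ne_zero hp ht0.ne']
  have : (p : ℝ) * t ^ (p - 1) ≠ 0 := by positivity
  field_simp

noncomputable def etaDerivNum (p : ℕ) (t : ℝ) : ℝ := t / (1 - t ^ 2) - ((p : ℝ) - 1) * arctanh t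

lemma hasDerivAt_etaDerivNum (p : ℕ) {t : ℝ} (h1 : -1 < t) (h2 : t < 1) :
    HasDerivAt (etaDerivNum p) ((p * t ^ 2 - (p - 2)) / (1 - t ^ 2) ^ 2) t := by
  have h3 : 1 - t ^ 2 ≠ 0 := by nlinarith
  refine (((hasDerivAt_id' t).div ((hasDerivAt_pow 2 t).const_sub 1) h3).sub
    ((hasDerivAt_arctanh h1 h2).const_mul _)).congr_deriv ?_
  field_simp
  ring

lemma hasDerivAt_etaFn {p : ℕ} (hp : p ≠ 0) {t : ℝ} (ht0 : 0 < t) (ht1 : t < 1) :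
    HasDerivAt (etaFn p) (etaDerivNum p t / (p * t ^ p)) t := by
  have h := ((hasDerivAt_zpow (1 - p) t (Or.inl ht0.ne')).const_mul (p : ℝ)⁻¹).mul
    (hasDerivAt_arctanh (by linarith) ht1)
  refine (h.congr_of_eventuallyEq ?_).congr_deriv ?_
  · filter_upwards [eventually_ne_nhds ht0.ne'] with y hy using if_neg hy
  · have h3 : 1 - t ^ 2 ≠ 0 := by nlinarith
    rw [show (1 - p : ℤ) - 1 = -p by ring, zpow_neg, zpow_sub₀ ht0.ne', zpow_one, zpow_natCast,
      etaDerivNum]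
    push_cast
    field_simp
    ring

/-- `etaDerivNum p` vanishes at `0`, decreases up to `√((p-2)/p)` and increases after it, so it
changes sign at most once on `(0,1)`. -/
lemma etaDerivNum_neg_of_lt {p : ℕ} (hp : 3 ≤ p) {x y : ℝ} (hy : 0 < y) (hyx : y < x)
    (hx : x < 1) (hφ : etaDerivNum p x ≤ 0) : etaDerivNum p y < 0 := by
  have hp' : (3 : ℝ) ≤ p := by exact_mod_cast hp
  obtain ⟨s, hs0, hs⟩ : ∃ s : ℝ, 0 ≤ s ∧ p * s ^ 2 = p - 2 :=
    ⟨√((p - 2) / p), Real.sqrt_nonneg _, by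
      rw [Real.sq_sqrt (div_nonneg (by linarith) (by linarith))]; field_simp⟩
  have hs1 : s < 1 := by
    by_contra! h
    nlinarith [one_le_pow₀ (n := 2) h]
  have hderiv : ∀ z ∈ Ioo (-1 : ℝ) 1,
      HasDerivAt (etaDerivNum p) (p * (z ^ 2 - s ^ 2) / (1 - z ^ 2) ^ 2) z := fun z hz =>
    (hasDerivAt_etaDerivNum p hz.1 hz.2).congr_deriv (by rw [← hs]; ring)
  have hcont : ContinuousOn (etaDerivNum p) (Ioo (-1) 1) := fun z hz =>
    (hderiv z hz).continuousAt.continuousWithinAt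
  have hden : ∀ z ∈ Ioo (-1 : ℝ) 1, 0 < (1 - z ^ 2) ^ 2 := fun z hz =>
    pow_pos (by nlinarith [hz.1, hz.2]) 2
  rcases le_or_gt y s with hys | hsy
  · have hanti : StrictAntiOn (etaDerivNum p) (Icc 0 s) := by
      refine strictAntiOn_of_deriv_neg (convex_Icc 0 s)
        (hcont.mono (Icc_subset_Ioo (by norm_num) hs1)) fun z hz => ?_
      rw [interior_Icc] at hz
      have hz' : z ∈ Ioo (-1 : ℝ) 1 := ⟨by linarith [hz.1], by linarith [hz.2]⟩
      rw [(hderiv z hz').deriv]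
      exact div_neg_of_neg_of_pos (mul_neg_of_pos_of_neg (by positivity)
        (by nlinarith [hz.1, hz.2])) (hden z hz')
    have h0 : etaDerivNum p 0 = 0 := by simp [etaDerivNum, arctanh]
    simpa [h0] using hanti (left_mem_Icc.2 hs0) ⟨hy.le, hys⟩ hy
  · have hmono : StrictMonoOn (etaDerivNum p) (Ico s 1) := by
      refine strictMonoOn_of_deriv_pos (convex_Ico s 1)
        (hcont.mono fun z hz => ⟨by linarith [hz.1], hz.2⟩) fun z hz => ?_
      rw [interior_Ico] at hz
      have hz' : z ∈ Ioo (-1 : ℝ) 1 := ⟨by linarith [hz.1], hz.2⟩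
      rw [(hderiv z hz').deriv]
      exact div_pos (mul_pos (by positivity) (by nlinarith [hz.1, hz.2])) (hden z hz')
    exact (hmono ⟨hsy.le, hyx.trans hx⟩ ⟨hsy.le.trans hyx.le, hx⟩ hyx).trans_le hφ

lemma etaFn_strictAntiOn {p : ℕ} (hp : 3 ≤ p) {c : ℝ} (hc1 : c < 1)
    (hφ : etaDerivNum p c ≤ 0) : StrictAntiOn (etaFn p) (Ioc 0 c) := by
  have hp0 : p ≠ 0 := by omega
  refine strictAntiOn_of_deriv_neg (convex_Ioc 0 c) (fun z hz =>
    (hasDerivAt_etaFn hp0 hz.1 (hz.2.trans_lt hc1)).continuousAt.continuousWithinAt) fun z hz => ?_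
  rw [interior_Ioc] at hz
  rw [(hasDerivAt_etaFn hp0 hz.1 (hz.2.trans hc1)).deriv]
  exact div_neg_of_neg_of_pos (etaDerivNum_neg_of_lt hp hz.1 hz.2 hc1 hφ)
    (by have := hz.1; positivity)

lemma etaFn_strictMonoOn {p : ℕ} (hp : 3 ≤ p) {c : ℝ} (hc0 : 0 < c)
    (hφ : 0 ≤ etaDerivNum p c) : StrictMonoOn (etaFn p) (Ico c 1) := by
  have hp0 : p ≠ 0 := by omega
  refine strictMonoOn_of_deriv_pos (convex_Ico c 1) (fun z hz =>
    (hasDerivAt_etaFn hp0 (hc0.trans_le hz.1) hz.2).continuousAt.continuousWithinAt)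
    fun z hz => ?_
  rw [interior_Ico] at hz
  have hz0 : 0 < z := hc0.trans hz.1
  rw [(hasDerivAt_etaFn hp0 hz0 hz.2).deriv]
  refine div_pos (not_le.1 fun hz' => ?_) (by positivity)
  exact hφ.not_gt (etaDerivNum_neg_of_lt hp hc0 hz.1 hz.2 hz')

lemma bahH_strictMonoOn_of_etaFn_lt {p : ℕ} (hp : p ≠ 0) {β a b : ℝ} (ha : 0 ≤ a) (hb : b ≤ 1)
    (h : ∀ z ∈ Ioo a b, etaFn p z < β) : StrictMonoOn (bahH β p) (Icc a b) := by
  refine strictMonoOn_of_deriv_pos (convex_Icc a b) (continuous_bahH β p).continuousOn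
    fun z hz => ?_
  rw [interior_Icc] at hz
  have hz0 : 0 < z := ha.trans_lt hz.1
  rw [(hasDerivAt_bahH hp β hz0 (hz.2.trans_le hb)).deriv]
  exact mul_pos (by positivity) (sub_pos.2 (h z hz))

lemma bahH_strictAntiOn_of_lt_etaFn {p : ℕ} (hp : p ≠ 0) {β a b : ℝ} (ha : 0 ≤ a) (hb : b ≤ 1)
    (h : ∀ z ∈ Ioo a b, β < etaFn p z) : StrictAntiOn (bahH β p) (Icc a b) := by
  refine strictAntiOn_of_deriv_neg (convex_Icc a b) (continuous_bahH β p).continuousOn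
    fun z hz => ?_
  rw [interior_Icc] at hz
  have hz0 : 0 < z := ha.trans_lt hz.1
  rw [(hasDerivAt_bahH hp β hz0 (hz.2.trans_le hb)).deriv]
  exact mul_neg_of_pos_of_neg (by positivity) (sub_neg.2 (h z hz))

lemma half_le_arctanh {t : ℝ} (ht0 : 0 ≤ t) (ht1 : t < 1) : t / 2 ≤ arctanh t := by
  rw [arctanh_eq_log_sub (by linarith) ht1]
  linarith [Real.log_nonneg (by linarith : (1 : ℝ) ≤ 1 + t),
    Real.log_le_sub_one_of_pos (by linarith : (0 : ℝ) < 1 - t)]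

lemma tendsto_arctanh_nhdsLT_one : Tendsto arctanh (𝓝[<] 1) atTop := by
  have h1 : Tendsto (fun t : ℝ => 1 - t) (𝓝[<] 1) (𝓝[>] 0) :=
    tendsto_nhdsWithin_of_tendsto_nhds_of_eventually_within _
      ((continuous_const.sub continuous_id).tendsto' 1 0 (sub_self 1) |>.mono_left
        nhdsWithin_le_nhds)
      (eventually_nhdsWithin_of_forall fun t ht => mem_Ioi.2 (sub_pos.2 ht))
  have h2 := (tendsto_neg_atBot_atTop.comp (Real.tendsto_log_nhdsGT_zero.comp h1)).atTop_div_const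
    (two_pos : (0 : ℝ) < 2)
  refine tendsto_atTop_mono' _ ?_ h2
  filter_upwards [Ioo_mem_nhdsLT (zero_lt_one' ℝ)] with t ht
  rw [arctanh_eq_log_sub (by linarith [ht.1]) ht.2]
  have := Real.log_nonneg (by linarith [ht.1] : (1 : ℝ) ≤ 1 + t)
  simp only [Function.comp_apply]
  linarith

lemma tendsto_etaFn_nhdsLT_one {p : ℕ} (hp : p ≠ 0) : Tendsto (etaFn p) (𝓝[<] 1) atTop := by
  refine tendsto_atTop_mono' _ ?_
    (tendsto_arctanh_nhdsLT_one.const_mul_atTop (inv_pos.2 (by positivity : (0 : ℝ) < p)))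
  filter_upwards [Ioo_mem_nhdsLT (zero_lt_one' ℝ)] with t ht
  have hpow : 1 ≤ t ^ (1 - (p : ℤ)) := one_le_zpow_of_nonpos₀ ht.1 ht.2.le (by omega)
  have harc : 0 ≤ arctanh t := (half_le_arctanh ht.1.le ht.2).trans' (by linarith [ht.1])
  rw [etaFn, if_neg ht.1.ne', mul_assoc]
  exact mul_le_mul_of_nonneg_left (le_mul_of_one_le_left harc hpow) (by positivity)

lemma tendsto_etaFn_nhdsGT_zero {p : ℕ} (hp : 3 ≤ p) : Tendsto (etaFn p) (𝓝[>] 0) atTop := by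
  refine tendsto_atTop_mono' _ ?_
    (tendsto_inv_nhdsGT_zero.const_mul_atTop (inv_pos.2 (by positivity : (0 : ℝ) < 2 * p)))
  filter_upwards [Ioo_mem_nhdsGT (zero_lt_one' ℝ)] with t ht
  have hpow : t ^ (-2 : ℤ) ≤ t ^ (1 - (p : ℤ)) :=
    zpow_le_zpow_right_of_le_one₀ ht.1 ht.2.le (by omega)
  calc (2 * (p : ℝ))⁻¹ * t⁻¹ = (p : ℝ)⁻¹ * t ^ (-2 : ℤ) * (t / 2) := by
        field_simp
    _ ≤ (p : ℝ)⁻¹ * t ^ (1 - (p : ℤ)) * arctanh t := by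
        have := half_le_arctanh ht.1.le ht.2
        have := ht.1
        gcongr
    _ = etaFn p t := (if_neg ht.1.ne').symm

lemma not_isMaxOn_bahH_one {p : ℕ} (hp : p ≠ 0) (β : ℝ) :
    ¬ IsMaxOn (bahH β p) (Icc (-1) 1) 1 := by
  intro hmax
  obtain ⟨a, ha1, hsub⟩ := mem_nhdsLT_iff_exists_Ioo_subset.1
    ((tendsto_etaFn_nhdsLT_one hp).eventually_gt_atTop β)
  have ha1' : max a 0 < 1 := max_lt ha1 one_pos
  have hlt := bahH_strictAntiOn_of_lt_etaFn hp (le_max_right a 0) le_rfl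
    (fun z hz => hsub ⟨(le_max_left a 0).trans_lt hz.1, hz.2⟩)
    (left_mem_Icc.2 ha1'.le) (right_mem_Icc.2 ha1'.le) ha1'
  exact (hmax ⟨by linarith [le_max_right a 0], ha1'.le⟩).not_gt hlt

section Maximizer

variable {p : ℕ} {β m : ℝ}

lemma etaFn_eq_of_isMaxOn (hp : p ≠ 0) (hm0 : 0 < m) (hm1 : m < 1)
    (hmax : IsMaxOn (bahH β p) (Icc (-1) 1) m) : etaFn p m = β := by
  have hcrit := (hmax.isLocalMax (Icc_mem_nhds (by linarith) hm1)).hasDerivAt_eq_zero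
    (hasDerivAt_bahH hp β hm0 hm1)
  have : (p : ℝ) * m ^ (p - 1) ≠ 0 := by positivity
  linarith [(mul_eq_zero.1 hcrit).resolve_left this]

lemma etaDerivNum_nonneg_of_isMaxOn (hp : 3 ≤ p) (hm0 : 0 < m) (hm1 : m < 1)
    (hmax : IsMaxOn (bahH β p) (Icc (-1) 1) m) : 0 ≤ etaDerivNum p m := by
  by_contra! hneg
  have hφ : ∀ᶠ c in 𝓝[>] m, etaDerivNum p c < 0 ∧ c ∈ Ioo m 1 :=
    (((hasDerivAt_etaDerivNum p (by linarith) hm1).continuousAt.eventually_lt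
      continuousAt_const hneg).filter_mono nhdsWithin_le_nhds).and (Ioo_mem_nhdsGT hm1)
  obtain ⟨c, hφc, hmc, hc1⟩ := hφ.exists
  have hanti := etaFn_strictAntiOn hp hc1 hφc.le
  have hmono := bahH_strictMonoOn_of_etaFn_lt (by omega) hm0.le hc1.le fun z hz =>
    etaFn_eq_of_isMaxOn (by omega) hm0 hm1 hmax ▸
      hanti ⟨hm0, hmc.le⟩ ⟨hm0.trans hz.1, hz.2.le⟩ hz.1
  exact (hmax ⟨by linarith, hc1.le⟩).not_gt
    (hmono (left_mem_Icc.2 hmc.le) (right_mem_Icc.2 hmc.le) hmc)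

lemma lt_etaFn_of_isMaxOn (hp : 3 ≤ p) (hm0 : 0 < m) (hm1 : m < 1)
    (hmax : IsMaxOn (bahH β p) (Icc (-1) 1) m) {t : ℝ} (ht : t ∈ Ioo m 1) : β < etaFn p t :=
  etaFn_eq_of_isMaxOn (by omega) hm0 hm1 hmax ▸
    etaFn_strictMonoOn hp hm0 (etaDerivNum_nonneg_of_isMaxOn hp hm0 hm1 hmax)
      ⟨le_rfl, hm1⟩ ⟨ht.1.le, ht.2⟩ ht.1

lemma bahH_neg_of_isMaxOn (hp : 3 ≤ p) (hm1 : m < 1) (hmax : IsMaxOn (bahH β p) (Icc (-1) 1) m)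
    {t : ℝ} (ht0 : 0 < t) (htm : t < m) (hβt : β < etaFn p t) : bahH β p t < 0 := by
  have hp0 : p ≠ 0 := by omega
  have hm0 := ht0.trans htm
  have hφt : etaDerivNum p t ≤ 0 := by
    by_contra! hφt
    have := etaFn_strictMonoOn hp ht0 hφt.le ⟨le_rfl, htm.trans hm1⟩ ⟨htm.le, hm1⟩ htm
    rw [etaFn_eq_of_isMaxOn hp0 hm0 hm1 hmax] at this
    exact this.not_gt hβt
  have hanti := bahH_strictAntiOn_of_lt_etaFn hp0 le_rfl (htm.trans hm1).le fun z hz =>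
    hβt.trans (etaFn_strictAntiOn hp (htm.trans hm1) hφt ⟨hz.1, hz.2.le⟩ ⟨ht0, le_rfl⟩ hz.2)
  simpa [bahH_zero β hp0] using
    hanti (left_mem_Icc.2 ht0.le) (right_mem_Icc.2 ht0.le) ht0

lemma bahH_lt_of_isMaxOn (hp : p ≠ 0) (hm0 : 0 ≤ m) (hmax : IsMaxOn (bahH β p) (Icc (-1) 1) m)
    {β₀ x : ℝ} (hβ₀ : β₀ < β) (hx : x ∈ Icc (-1) 1) (hmx : m < x) :
    bahH β₀ p x < bahH β₀ p m := by
  have hpow := mul_lt_mul_of_pos_left (pow_lt_pow_left₀ hmx hm0 hp) (sub_pos.2 hβ₀)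
  have : bahH β p x ≤ bahH β p m := hmax hx
  simp only [bahH] at this ⊢
  linarith

end Maximizer

lemma exists_mem_Ioc_of_lt_etaFn {p : ℕ} (hp : p ≠ 0) {β β₀ t : ℝ} (hβ : 0 < β)
    (ht : t ∈ Icc (-1) 1) (hβt : β < etaFn p t) :
    ∃ u ∈ Ioc 0 1, β < etaFn p u ∧ bahH β₀ p u = bahH β₀ p t := by
  rcases lt_trichotomy t 0 with ht0 | rfl | ht0
  · rcases Nat.even_or_odd p with hpe | hpo
    · exact ⟨-t, ⟨by linarith, by linarith [ht.1]⟩, etaFn_neg_of_even hpe t ▸ hβt,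
        bahH_neg_of_even β₀ hpe t⟩
    · have := etaFn_nonneg hp (t := -t) ⟨by linarith, by linarith [ht.1]⟩
      rw [etaFn_neg_of_odd hpo] at this
      linarith
  · rw [etaFn_zero] at hβt
    exact absurd hβ hβt.not_gt
  · exact ⟨t, ⟨ht0, ht.2⟩, hβt, rfl⟩

lemma le_csSup_image_of_tendsto {α β : Type*} [TopologicalSpace β] [ConditionallyCompleteLattice β]
    [ClosedIicTopology β] {f : α → β} {S : Set α} {l : Filter α} [l.NeBot] {c : β}
    (hbdd : BddAbove (f '' S)) (hS : ∀ᶠ x in l, x ∈ S) (hf : Tendsto f l (𝓝 c)) :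
    c ≤ sSup (f '' S) :=
  le_of_tendsto hf (hS.mono fun _ hx => le_csSup hbdd (mem_image_of_mem f hx))

section Suprema

variable {p : ℕ} {β β₀ m : ℝ}

lemma sSup_bahH_image_Ioc (hp : p ≠ 0) (hm0 : 0 ≤ m) (hm1 : m < 1)
    (hmax : IsMaxOn (bahH β p) (Icc (-1) 1) m) (hβ₀ : β₀ < β) :
    sSup (bahH β₀ p '' Ioc m 1) = bahH β₀ p m := by
  have hub : ∀ y ∈ bahH β₀ p '' Ioc m 1, y ≤ bahH β₀ p m := forall_mem_image.2 fun x hx =>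
    (bahH_lt_of_isMaxOn hp hm0 hmax hβ₀ ⟨by linarith [hx.1], hx.2⟩ hx.1).le
  refine le_antisymm (csSup_le ((nonempty_Ioc.2 hm1).image _) hub) ?_
  exact le_csSup_image_of_tendsto ⟨_, hub⟩ (Ioc_mem_nhdsGT hm1)
    ((continuous_bahH β₀ p).tendsto m |>.mono_left nhdsWithin_le_nhds)

lemma sSup_bahH_image_lt_etaFn (hp : 3 ≤ p) (hm0 : 0 < m) (hm1 : m < 1)
    (hmax : IsMaxOn (bahH β p) (Icc (-1) 1) m) (hβ₀ : β₀ < β) :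
    sSup (bahH β₀ p '' {t ∈ Icc (-1) 1 | β < etaFn p t}) = max 0 (bahH β₀ p m) := by
  have hp0 : p ≠ 0 := by omega
  set S := {t ∈ Icc (-1 : ℝ) 1 | β < etaFn p t}
  have hβ : 0 < β := etaFn_eq_of_isMaxOn hp0 hm0 hm1 hmax ▸ etaFn_pos hp0 ⟨hm0, hm1⟩
  have hub : ∀ y ∈ bahH β₀ p '' S, y ≤ max 0 (bahH β₀ p m) := by
    rintro _ ⟨t, ⟨ht, hβt⟩, rfl⟩
    obtain ⟨u, ⟨hu0, hu1⟩, hβu, hHu⟩ := exists_mem_Ioc_of_lt_etaFn hp0 (β₀ := β₀) hβ ht hβt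
    rw [← hHu]
    rcases lt_trichotomy u m with hum | rfl | hmu
    · exact ((bahH_lt_bahH_of_lt p hβ₀ hu0).trans
        (bahH_neg_of_isMaxOn hp hm1 hmax hu0 hum hβu)).le.trans (le_max_left _ _)
    · exact absurd (etaFn_eq_of_isMaxOn hp0 hm0 hm1 hmax) hβu.ne'
    · exact (bahH_lt_of_isMaxOn hp0 hm0.le hmax hβ₀ ⟨by linarith, hu1⟩ hmu).le.trans
        (le_max_right _ _)
  have hsmall : ∀ᶠ t in 𝓝[>] 0, t ∈ S := by
    filter_upwards [(tendsto_etaFn_nhdsGT_zero hp).eventually_gt_atTop β,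
      Ioo_mem_nhdsGT (zero_lt_one' ℝ)] with t hβt ht using ⟨⟨by linarith [ht.1], ht.2.le⟩, hβt⟩
  have hright : ∀ᶠ t in 𝓝[>] m, t ∈ S := by
    filter_upwards [Ioo_mem_nhdsGT hm1] with t ht using
      ⟨⟨by linarith [ht.1], ht.2.le⟩, lt_etaFn_of_isMaxOn hp hm0 hm1 hmax ht⟩
  have hlim : ∀ a, Tendsto (bahH β₀ p) (𝓝[>] a) (𝓝 (bahH β₀ p a)) := fun a =>
    (continuous_bahH β₀ p).tendsto a |>.mono_left nhdsWithin_le_nhds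
  refine le_antisymm (csSup_le (Set.Nonempty.image _ hsmall.exists) hub) (max_le ?_ ?_)
  · simpa [bahH_zero β₀ hp0] using le_csSup_image_of_tendsto ⟨_, hub⟩ hsmall (hlim 0)
  · exact le_csSup_image_of_tendsto ⟨_, hub⟩ hright (hlim m)

end Suprema

theorem statement8_general (p : ℕ) (hp : 3 ≤ p) (β β₀ : ℝ) (h1 : β₀ < β)
    (m : ℝ) (hm0 : 0 < m) (hm1 : m ∈ Set.Icc (-1 : ℝ) 1)
    (hmax : IsMaxOn (bahH β p) (Set.Icc (-1 : ℝ) 1) m) :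
    sSup (bahH β₀ p '' {t ∈ Set.Icc (-1 : ℝ) 1 | β < etaFn p t})
      = sSup (bahH β₀ p '' Set.Ioc m 1) ↔ 0 ≤ bahH β₀ p m := by
  have hp0 : p ≠ 0 := by omega
  have hm1' : m < 1 := hm1.2.lt_of_ne fun h => not_isMaxOn_bahH_one hp0 β (h ▸ hmax)
  rw [sSup_bahH_image_lt_etaFn hp hm0 hm1' hmax h1, sSup_bahH_image_Ioc hp0 hm0.le hm1' hmax h1]
  exact max_eq_right_iff

/-- For `p ≥ 3` and `β > β₀ > β*(p)`, with `m = m_*(β,p)` the positive global maximizer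
of `H_{β,p}` on `[−1,1]`:
`sup_{x ∈ η_p⁻¹((β,∞))} H_{β₀,p}(x) = sup_{x ∈ (m, 1]} H_{β₀,p}(x)` holds if and only if
`H_{β₀,p}(m) ≥ 0`. -/
theorem statement8 (p : ℕ) (hp : 3 ≤ p) (β β₀ : ℝ) (h0 : betaStar p < β₀) (h1 : β₀ < β)
    (m : ℝ) (hm0 : 0 < m) (hm1 : m ∈ Set.Icc (-1 : ℝ) 1)
    (hmax : IsMaxOn (bahH β p) (Set.Icc (-1 : ℝ) 1) m) :
    sSup (bahH β₀ p '' {t ∈ Set.Icc (-1 : ℝ) 1 | β < etaFn p t})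
      = sSup (bahH β₀ p '' Set.Ioc m 1) ↔ 0 ≤ bahH β₀ p m :=
  statement8_general p hp β β₀ h1 m hm0 hm1 hmax
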